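/- arXiv:2203.09758 — 2 statements merged into one kernel-verified Lean document; each statement's English description precedes it below -/
import Mathlib

section
/- Let A ∈ L(⊗_{a∈𝒜} H_a) and B ∈ L(⊗_{b∈ℬ} H_b) be operators on tensor products of finite-dimensional Hilbert spaces indexed by finite sets 𝒜 and ℬ. Define the link product A * B := Tr_{𝒜∩ℬ}[ (1_{ℬ∖𝒜} ⊗ A^{T_{𝒜∩ℬ}})(B ⊗ 1_{𝒜∖ℬ}) ]. Then the link product is commutative: A * B = B * A, whenever A and B are Hermitian. -/
open Matrix Kronecker

/-- Partial transpose over the common factor `γ` of an operator on `H_α ⊗ H_γ`. -/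
def ptransposeA {α γ : Type*} (A : Matrix (α × γ) (α × γ) ℂ) : Matrix (α × γ) (α × γ) ℂ :=
  Matrix.of fun p q => A (p.1, q.2) (q.1, p.2)

/-- Partial transpose over the common factor `γ` of an operator on `H_γ ⊗ H_β`. -/
def ptransposeB {γ β : Type*} (B : Matrix (γ × β) (γ × β) ℂ) : Matrix (γ × β) (γ × β) ℂ :=
  Matrix.of fun p q => B (q.1, p.2) (p.1, q.2)

/-- Partial trace over the middle factor `γ` of an operator on `(H_α ⊗ H_γ) ⊗ H_β`. -/
noncomputable def ptraceMid {α γ β : Type*} [Fintype γ] (M : Matrix ((α × γ) × β) ((α × γ) × β) ℂ) :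
    Matrix (α × β) (α × β) ℂ :=
  Matrix.of fun x y => ∑ c : γ, M ((x.1, c), x.2) ((y.1, c), y.2)

/-- The link product `A * B = Tr_γ[(A^{T_γ} ⊗ 1_β)(1_α ⊗ B)]` of
`A` on `H_α ⊗ H_γ` and `B` on `H_γ ⊗ H_β` (common spaces `γ = 𝒜 ∩ ℬ`). -/
noncomputable def linkProduct {α γ β : Type*} [Fintype α] [Fintype γ] [Fintype β]
    [DecidableEq α] [DecidableEq β]
    (A : Matrix (α × γ) (α × γ) ℂ) (B : Matrix (γ × β) (γ × β) ℂ) :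
    Matrix (α × β) (α × β) ℂ :=
  ptraceMid ((ptransposeA A ⊗ₖ (1 : Matrix β β ℂ)) *
    (Matrix.reindex (Equiv.prodAssoc α γ β).symm (Equiv.prodAssoc α γ β).symm
      ((1 : Matrix α α ℂ) ⊗ₖ B)))

/-- The link product computed in the other order,
`B * A = Tr_γ[(1_α ⊗ B^{T_γ})(A ⊗ 1_β)]`. -/
noncomputable def linkProduct' {α γ β : Type*} [Fintype α] [Fintype γ] [Fintype β]
    [DecidableEq α] [DecidableEq β]
    (B : Matrix (γ × β) (γ × β) ℂ) (A : Matrix (α × γ) (α × γ) ℂ) :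
    Matrix (α × β) (α × β) ℂ :=
  ptraceMid ((Matrix.reindex (Equiv.prodAssoc α γ β).symm (Equiv.prodAssoc α γ β).symm
    ((1 : Matrix α α ℂ) ⊗ₖ ptransposeB B)) * (A ⊗ₖ (1 : Matrix β β ℂ)))

theorem linkProduct_apply {α γ β : Type*} [Fintype α] [Fintype γ] [Fintype β]
    [DecidableEq α] [DecidableEq β]
    (A : Matrix (α × γ) (α × γ) ℂ) (B : Matrix (γ × β) (γ × β) ℂ) (x y : α × β) :
    linkProduct A B x y = ∑ c : γ, ∑ c' : γ, A (x.1, c') (y.1, c) * B (c', x.2) (c, y.2) := by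
  simp [linkProduct, ptraceMid, ptransposeA, Matrix.mul_apply, Matrix.one_apply,
    Fintype.sum_prod_type]

theorem linkProduct'_apply {α γ β : Type*} [Fintype α] [Fintype γ] [Fintype β]
    [DecidableEq α] [DecidableEq β]
    (B : Matrix (γ × β) (γ × β) ℂ) (A : Matrix (α × γ) (α × γ) ℂ) (x y : α × β) :
    linkProduct' B A x y = ∑ c : γ, ∑ c' : γ, B (c', x.2) (c, y.2) * A (x.1, c') (y.1, c) := by
  simp [linkProduct', ptraceMid, ptransposeB, Matrix.mul_apply, Matrix.one_apply,
    Fintype.sum_prod_type]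

theorem stmt_7_general {α γ β : Type*} [Fintype α] [Fintype γ] [Fintype β]
    [DecidableEq α] [DecidableEq β]
    (A : Matrix (α × γ) (α × γ) ℂ) (B : Matrix (γ × β) (γ × β) ℂ) :
    linkProduct A B = linkProduct' B A := by
  ext x y
  simp only [linkProduct_apply, linkProduct'_apply, mul_comm]

/-- Commutativity of the link product for Hermitian operators: `A * B = B * A`. -/
theorem stmt_7 {α γ β : Type*} [Fintype α] [Fintype γ] [Fintype β]
    [DecidableEq α] [DecidableEq β]
    (A : Matrix (α × γ) (α × γ) ℂ) (B : Matrix (γ × β) (γ × β) ℂ)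
    (hA : A.IsHermitian) (hB : B.IsHermitian) :
    linkProduct A B = linkProduct' B A :=
  stmt_7_general A B
end

section
/- For the amplitude damping channel composed with a z-rotation, with Kraus operators K₁ = (|0⟩⟨0| + √(1−p)|1⟩⟨1|)·exp(−iφt σ_z/2) and K₂ = √p |0⟩⟨1|·exp(−iφt σ_z/2), 0 < p ≤ 1, there exists a 2×2 Hermitian matrix h (explicitly h₁₁ = −t/2, h₂₂ = (2−p)t/2p, h₁₂ = h₂₁ = 0) such that β := i Σ_i K_i† (K̇_i − i Σ_j h_{ij} K_j) = 0. -/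
/-!
Each Kraus operator factors as `Kᵢ(φ) = Aᵢ U(φ)` with `U(φ) = diag(e^{c₀φ}, e^{c₁φ})`,
`c = (−it/2, it/2)`, so `K̇ᵢ = Kᵢ diag(c)`. Since `U` is unitary and every `Aᵢ†Aᵢ` is diagonal
(`A₁†A₁ = diag(1, 1 − p)`, `A₂†A₂ = diag(0, p)`), a diagonal gauge `h` makes
`β = Σᵢ Aᵢ†Aᵢ (i diag(c) + hᵢᵢ)` diagonal, and the chosen `h` kills both of its entries.
-/

open Matrix Complex

section GaugedBeta

variable {ι n : Type*} [Fintype ι] [Fintype n] [DecidableEq n]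

noncomputable def gaugedBeta (K : ι → ℝ → Matrix n n ℂ) (h : Matrix ι ι ℂ) (φ : ℝ) :
    Matrix n n ℂ :=
  I • ∑ i, (K i φ)ᴴ * (of (fun a b => deriv (fun x => K i x a b) φ) - I • ∑ j, h i j • K j φ)

theorem Matrix.of_two_diag_eq_diagonal {α : Type*} [Zero α] (a b : α) :
    of ![![a, 0], ![0, b]] = diagonal ![a, b] := by
  ext i j
  fin_cases i <;> fin_cases j <;> rfl

theorem Complex.star_exp_mul_exp_of_re_eq_zero {z : ℂ} (hz : z.re = 0) :
    star (exp z) * exp z = 1 := by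
  rw [RCLike.star_def, ← exp_conj, ← exp_add, add_comm, add_conj, hz]
  simp

theorem deriv_mul_diagonal_exp_apply {m : Type*} (A : Matrix m n ℂ) (c : n → ℂ) (φ : ℝ)
    (a : m) (b : n) :
    deriv (fun x : ℝ => (A * diagonal fun k => exp (c k * x)) a b) φ =
      (A * diagonal (fun k => exp (c k * φ)) * diagonal c) a b := by
  have hexp : HasDerivAt (fun x : ℝ => exp (c b * x)) (exp (c b * φ) * c b) φ := by
    simpa using ((hasDerivAt_id φ).ofReal_comp.const_mul (c b)).cexp
  simp only [mul_diagonal]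
  rw [(hexp.const_mul (A a b)).deriv, mul_assoc]

theorem conjTranspose_mul_self_mul_diagonal {u m : n → ℂ} (hu : ∀ k, star (u k) * u k = 1)
    {A : Matrix n n ℂ} (hA : Aᴴ * A = diagonal m) :
    (A * diagonal u)ᴴ * (A * diagonal u) = diagonal m := by
  rw [conjTranspose_mul, diagonal_conjTranspose, Matrix.mul_assoc, ← Matrix.mul_assoc Aᴴ, hA,
    diagonal_mul_diagonal, diagonal_mul_diagonal]
  congr 1
  funext k
  linear_combination m k * hu k

variable [DecidableEq ι]

theorem gaugedBeta_diagonal_eq_diagonal {K : ι → ℝ → Matrix n n ℂ} {A : ι → Matrix n n ℂ}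
    {c : n → ℂ} (hc : ∀ k, (c k).re = 0)
    (hK : ∀ i x, K i x = A i * diagonal fun k => exp (c k * x))
    {m : ι → n → ℂ} (hA : ∀ i, (A i)ᴴ * A i = diagonal (m i)) (d : ι → ℂ) (φ : ℝ) :
    gaugedBeta K (diagonal d) φ = diagonal fun k => ∑ i, m i k * (I * c k + d i) := by
  set U := diagonal fun k => exp (c k * φ)
  have hU : ∀ k, star (exp (c k * φ)) * exp (c k * φ) = 1 := fun k =>
    star_exp_mul_exp_of_re_eq_zero (by simp [hc k])
  have hderiv : ∀ i, of (fun a b => deriv (fun x => K i x a b) φ) = A i * U * diagonal c := by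
    intro i
    ext a b
    simp only [hK, of_apply, deriv_mul_diagonal_exp_apply, U]
  have hgauge : ∀ i, ∑ j, diagonal d i j • K j φ = d i • (A i * U) := by
    intro i
    simp [diagonal_apply, hK, U]
  have hterm : ∀ i, (K i φ)ᴴ * (A i * U * diagonal c - I • d i • (A i * U)) =
      diagonal (m i) * diagonal c - (I * d i) • diagonal (m i) := by
    intro i
    rw [hK, Matrix.mul_sub, ← Matrix.mul_assoc, Matrix.mul_smul, Matrix.mul_smul, smul_smul,
      conjTranspose_mul_self_mul_diagonal hU (hA i)]
  simp only [gaugedBeta, hderiv, hgauge, hterm]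
  ext k l
  rcases eq_or_ne k l with rfl | hkl
  · simp only [diagonal_mul_diagonal, Matrix.smul_apply, Matrix.sub_apply, Matrix.sum_apply,
      diagonal_apply_eq, smul_eq_mul, Finset.mul_sum]
    refine Finset.sum_congr rfl fun i _ => ?_
    linear_combination -(d i * m i k) * I_sq
  · simp [Matrix.sum_apply, hkl]

end GaugedBeta

noncomputable def ampDampKraus (p : ℝ) : Fin 2 → Matrix (Fin 2) (Fin 2) ℂ :=
  ![!![1, 0; 0, (√(1 - p) : ℂ)], !![0, (√p : ℂ); 0, 0]]

theorem ampDampKraus_zero_conjTranspose_mul_self {p : ℝ} (hp : p ≤ 1) :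
    (ampDampKraus p 0)ᴴ * ampDampKraus p 0 = diagonal ![1, ((1 - p : ℝ) : ℂ)] := by
  ext i j
  fin_cases i <;> fin_cases j <;>
    simp [ampDampKraus, Matrix.mul_apply, ← ofReal_mul, Real.mul_self_sqrt (sub_nonneg.2 hp)]

theorem ampDampKraus_one_conjTranspose_mul_self {p : ℝ} (hp : 0 ≤ p) :
    (ampDampKraus p 1)ᴴ * ampDampKraus p 1 = diagonal ![0, (p : ℂ)] := by
  ext i j
  fin_cases i <;> fin_cases j <;>
    simp [ampDampKraus, Matrix.mul_apply, ← ofReal_mul, Real.mul_self_sqrt hp]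

/-- For the amplitude damping channel composed with a `z`-rotation, with Kraus operators
`K₁ = (|0⟩⟨0| + √(1−p)|1⟩⟨1|)·exp(−iφtσ_z/2)` and `K₂ = √p |0⟩⟨1|·exp(−iφtσ_z/2)`,
the Hermitian matrix `h = diag(−t/2, (2−p)t/(2p))` makes
`β = i Σᵢ Kᵢ† (K̇ᵢ − i Σⱼ h_{ij} Kⱼ)` vanish. -/
theorem stmt_18 (p t φ : ℝ) (hp0 : 0 < p) (hp1 : p ≤ 1)
    (K : Fin 2 → ℝ → Matrix (Fin 2) (Fin 2) ℂ)
    (hK1 : ∀ x : ℝ, K 0 x =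
      Matrix.of ![![1, 0], ![0, (Real.sqrt (1 - p) : ℂ)]] *
        Matrix.of ![![Complex.exp (-(Complex.I * (x : ℂ) * (t : ℂ)) / 2), 0],
          ![0, Complex.exp ((Complex.I * (x : ℂ) * (t : ℂ)) / 2)]])
    (hK2 : ∀ x : ℝ, K 1 x =
      Matrix.of ![![0, (Real.sqrt p : ℂ)], ![0, 0]] *
        Matrix.of ![![Complex.exp (-(Complex.I * (x : ℂ) * (t : ℂ)) / 2), 0],
          ![0, Complex.exp ((Complex.I * (x : ℂ) * (t : ℂ)) / 2)]])
    (h : Matrix (Fin 2) (Fin 2) ℂ)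
    (hh : h = Matrix.of ![![((-(t / 2) : ℝ) : ℂ), 0],
      ![0, (((2 - p) * t / (2 * p) : ℝ) : ℂ)]]) :
    h.IsHermitian ∧
    Complex.I • ∑ i : Fin 2, (K i φ)ᴴ *
      (Matrix.of (fun a b => deriv (fun x => K i x a b) φ) -
        Complex.I • ∑ j : Fin 2, h i j • K j φ) = 0 := by
  set c : Fin 2 → ℂ := ![-(I * t / 2), I * t / 2]
  have hc : ∀ k, (c k).re = 0 := Fin.forall_fin_two.2 ⟨by simp [c], by simp [c]⟩
  have hU : ∀ x : ℝ, of ![![exp (-(I * x * t) / 2), 0], ![0, exp (I * x * t / 2)]] =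
      diagonal fun k => exp (c k * x) := by
    intro x
    rw [of_two_diag_eq_diagonal]
    congr 1
    refine funext (Fin.forall_fin_two.2 ⟨?_, ?_⟩) <;>
      simp only [c, cons_val_zero, cons_val_one, cons_val_fin_one] <;> congr 1 <;> ring
  have hK : ∀ i x, K i x = ampDampKraus p i * diagonal fun k => exp (c k * x) := by
    refine Fin.forall_fin_two.2 ⟨fun x => ?_, fun x => ?_⟩
    · rw [hK1, hU]; rfl
    · rw [hK2, hU]; rfl
  have hA : ∀ i, (ampDampKraus p i)ᴴ * ampDampKraus p i =
      diagonal (![![1, ((1 - p : ℝ) : ℂ)], ![0, (p : ℂ)]] i) :=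
    Fin.forall_fin_two.2
      ⟨ampDampKraus_zero_conjTranspose_mul_self hp1, ampDampKraus_one_conjTranspose_mul_self hp0.le⟩
  rw [of_two_diag_eq_diagonal] at hh
  subst hh
  refine ⟨isHermitian_diagonal_of_self_adjoint _ ?_, ?_⟩
  · ext k; fin_cases k <;> simp
  change gaugedBeta K _ φ = 0
  rw [gaugedBeta_diagonal_eq_diagonal hc hK hA, diagonal_eq_zero]
  have hp : (p : ℂ) ≠ 0 := ofReal_ne_zero.2 hp0.ne'
  refine funext (Fin.forall_fin_two.2 ⟨?_, ?_⟩) <;>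
    simp only [Fin.sum_univ_two, c, cons_val_zero, cons_val_one, cons_val_fin_one,
      Pi.zero_apply] <;>
    push_cast
  · linear_combination -(t / 2 : ℂ) * I_sq
  · field_simp
    linear_combination (t : ℂ) * I_sq
end
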